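/- arXiv:1312.2775 — 7 statements merged into one kernel-verified Lean document; each statement's English description precedes it below -/
import Mathlib

section
/- Let V be a vector space over ℚ and p ≥ 3 an integer. Suppose x_1, ..., x_{p-2} ∈ V satisfy x_{λ1} + x_{λ2} + x_{λ3} = 0 for all positive integers λ1, λ2, λ3 with λ1 + λ2 + λ3 = p. Then there exists α ∈ V such that x_i = (i/p - 1/3)·α for all 1 ≤ i ≤ p-2. -/
theorem stmt0 (V : Type*) [AddCommGroup V] [Module ℚ V] (p : ℕ) (hp : 3 ≤ p)
    (x : ℕ → V)
    (hx : ∀ l1 l2 l3 : ℕ, 1 ≤ l1 → 1 ≤ l2 → 1 ≤ l3 → l1 + l2 + l3 = p →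
      x l1 + x l2 + x l3 = 0) :
    ∃ α : V, ∀ i : ℕ, 1 ≤ i → i ≤ p - 2 →
      x i = ((i : ℚ) / p - 1 / 3) • α := by
  rcases eq_or_lt_of_le hp with hp3 | hp4
  · refine ⟨0, ?_⟩
    intro i h1 h2
    have hi : i = 1 := by omega
    subst hi
    have h := hx 1 1 1 le_rfl le_rfl le_rfl (by omega)
    have h3 : (3 : ℚ) • x 1 = 0 := by
      rw [show (3:ℚ) = 1+1+1 by norm_num, add_smul, add_smul, one_smul]
      rw [← h]
    have hx1 : x 1 = 0 := by
      rcases smul_eq_zero.mp h3 with h | h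
      · norm_num at h
      · exact h
    simp [hx1]
  · set d := x 2 - x 1 with hd
    have key : ∀ k : ℕ, k ≤ p - 3 → x (k+1) = x 1 + (k:ℚ) • d := by
      intro k
      induction k with
      | zero => intro _; simp
      | succ n ih =>
        intro hn
        have h1 := ih (by omega)
        have ha := hx (n+1) 2 (p - n - 3) (by omega) (by omega) (by omega) (by omega)
        have hb := hx (n+2) 1 (p - n - 3) (by omega) (by omega) (by omega) (by omega)
        have h2 : x (n+2) + x 1 = x (n+1) + x 2 := add_right_cancel (hb.trans ha.symm)
        have hstep : x (n+2) = x (n+1) + d := by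
          rw [eq_sub_of_add_eq h2, hd]; abel
        rw [show n+1+1 = n+2 from rfl, hstep, h1]
        push_cast
        module
    have hend := key (p-3) le_rfl
    rw [show p - 3 + 1 = p - 2 by omega] at hend
    have h0 := hx 1 1 (p-2) le_rfl le_rfl (by omega) (by omega)
    have hc : ((p - 3 : ℕ) : ℚ) = (p : ℚ) - 3 := by
      push_cast [Nat.cast_sub (by omega : 3 ≤ p)]; ring
    rw [hend, hc] at h0
    have h3 : (3 : ℚ) • x 1 = ((3:ℚ) - p) • d := by
      linear_combination (norm := module) h0
    have hx1 : x 1 = ((1 : ℚ) - (p:ℚ)/3) • d := by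
      calc x 1 = (3:ℚ)⁻¹ • ((3:ℚ) • x 1) := by rw [smul_smul]; norm_num
        _ = (3:ℚ)⁻¹ • (((3:ℚ) - p) • d) := by rw [h3]
        _ = _ := by rw [smul_smul]; congr 1; ring
    refine ⟨(p : ℚ) • d, ?_⟩
    intro i hi1 hi2
    have hk := key (i - 1) (by omega)
    rw [show i - 1 + 1 = i by omega] at hk
    have hp0 : (p : ℚ) ≠ 0 := by positivity
    rw [hk, hx1]
    have hic : ((i - 1 : ℕ) : ℚ) = (i : ℚ) - 1 := by
      push_cast [Nat.cast_sub hi1]; ring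
    rw [hic]
    match_scalars <;> (field_simp; ring)
end

section
/- Let V be a ℚ-vector space and suppose v_{i,j} ∈ V for all integers i,j ≥ 1. Define z_{i,j} := -v_{i,j} - v_{j,i}. Assume: (1) for all positive integers a_1,a_2,a_3, the sum over the three pairs {i<j} with {i,j,k}={1,2,3} of (v_{a_k, a_i+a_j} + z_{a_i,a_j}) equals 0; and (2) for all positive integers a_1,a_2,c_1,c_2 with a_1+a_2 = c_1+c_2, z_{a_1,a_2} - z_{c_1,c_2} - Σ_{(i,j): a_i > c_j} v_{c_j, a_i - c_j} + Σ_{(i,j): c_i > a_j} v_{a_j, c_i - a_j} = 0. Then there exist vectors α_2, α_3, ... ∈ V (with α_1 := 0) such that v_{i,j} = (i/(i+j) - 1/3)·α_{i+j} + (1/3 - (i+j)/i)·α_i + (1/3)·α_j for all i,j ≥ 1. -/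
section Aux

variable {V : Type*} [AddCommGroup V] [Module ℚ V]

private def alph (v : ℕ → ℕ → V) : ℕ → V
  | 0 => 0
  | 1 => 0
  | 2 => (6 : ℚ) • v 1 1
  | 3 => (3 : ℚ) • v 2 1 + (21 : ℚ) • v 1 1
  | (m+4) => ((3 * ((m : ℚ) + 4)) / (3 - ((m : ℚ) + 4))) • (v 1 (m+3) - (1/3 : ℚ) • alph v (m+3))

private def FF (α : ℕ → V) (i j : ℕ) : V :=
  ((i : ℚ) / ((i : ℚ) + (j : ℚ)) - 1 / 3) • α (i + j)
    + (1 / 3 - ((i : ℚ) + (j : ℚ)) / (i : ℚ)) • α i + (1 / 3 : ℚ) • α j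

private lemma ffh1 (α : ℕ → V) (a b c : ℕ) (ha : 1 ≤ a) (hb : 1 ≤ b) (hc : 1 ≤ c) :
    FF α a (b + c) + FF α b (a + c) + FF α c (a + b)
      = (FF α a b + FF α b a) + (FF α a c + FF α c a) + (FF α b c + FF α c b) := by
  have ha0 : (0:ℚ) < a := by exact_mod_cast ha
  have hb0 : (0:ℚ) < b := by exact_mod_cast hb
  have hc0 : (0:ℚ) < c := by exact_mod_cast hc
  have h1 : (a:ℚ) ≠ 0 := ne_of_gt ha0
  have h2 : (b:ℚ) ≠ 0 := ne_of_gt hb0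
  have h3 : (c:ℚ) ≠ 0 := ne_of_gt hc0
  have h4 : (a:ℚ) + b ≠ 0 := ne_of_gt (by linarith)
  have h5 : (a:ℚ) + c ≠ 0 := ne_of_gt (by linarith)
  have h6 : (b:ℚ) + c ≠ 0 := ne_of_gt (by linarith)
  have h7 : (a:ℚ) + b + c ≠ 0 := ne_of_gt (by linarith)
  simp only [FF]
  rw [show a + (b + c) = a + b + c from by omega, show b + (a + c) = a + b + c from by omega,
      show c + (a + b) = a + b + c from by omega, show b + a = a + b from by omega,
      show c + a = a + c from by omega, show c + b = b + c from by omega]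
  push_cast
  match_scalars <;> (field_simp; try ring)


private lemma ffh2 (α : ℕ → V) (p q : ℕ) (hp : 1 ≤ p) (hq : 1 ≤ q) :
    (FF α 1 (p + q + 1) + FF α (p + q + 1) 1) - (FF α (p+1) (q+1) + FF α (q+1) (p+1))
      = FF α 1 p + FF α 1 q - FF α (p+1) q - FF α (q+1) p := by
  have hp0 : (0:ℚ) < p := by exact_mod_cast hp
  have hq0 : (0:ℚ) < q := by exact_mod_cast hq
  have h1 : (p:ℚ) ≠ 0 := ne_of_gt hp0
  have h2 : (q:ℚ) ≠ 0 := ne_of_gt hq0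
  have h3 : (p:ℚ) + 1 ≠ 0 := ne_of_gt (by linarith)
  have h4 : (q:ℚ) + 1 ≠ 0 := ne_of_gt (by linarith)
  have h5 : (p:ℚ) + q + 1 ≠ 0 := ne_of_gt (by linarith)
  have h6 : (p:ℚ) + q + 2 ≠ 0 := ne_of_gt (by linarith)
  have h7 : (1:ℚ) + p ≠ 0 := ne_of_gt (by linarith)
  have h8 : (1:ℚ) + q ≠ 0 := ne_of_gt (by linarith)
  have h9 : (1:ℚ) + ((p:ℚ) + q + 1) ≠ 0 := ne_of_gt (by linarith)
  have h10 : (p:ℚ) + q + 1 + 1 ≠ 0 := ne_of_gt (by linarith)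
  have h11 : (p:ℚ) + 1 + (q + 1) ≠ 0 := ne_of_gt (by linarith)
  have h12 : (q:ℚ) + 1 + (p + 1) ≠ 0 := ne_of_gt (by linarith)
  have h13 : (p:ℚ) + 1 + q ≠ 0 := ne_of_gt (by linarith)
  have h14 : (q:ℚ) + 1 + p ≠ 0 := ne_of_gt (by linarith)
  simp only [FF]
  rw [show 1 + (p + q + 1) = p + q + 2 from by omega,
      show (p + q + 1) + 1 = p + q + 2 from by omega,
      show (p+1) + (q+1) = p + q + 2 from by omega,
      show (q+1) + (p+1) = p + q + 2 from by omega,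
      show 1 + p = p + 1 from by omega,
      show 1 + q = q + 1 from by omega,
      show (p+1) + q = p + q + 1 from by omega,
      show (q+1) + p = p + q + 1 from by omega]
  push_cast
  match_scalars <;> (field_simp; try ring)


private lemma key (v z : ℕ → ℕ → V) (hz : ∀ i j, z i j = -v i j - v j i)
    (h1 : ∀ a1 a2 a3 : ℕ, 1 ≤ a1 → 1 ≤ a2 → 1 ≤ a3 →
      (v a3 (a1 + a2) + z a1 a2) + (v a2 (a1 + a3) + z a1 a3) +
        (v a1 (a2 + a3) + z a2 a3) = 0)
    (h2 : ∀ a1 a2 c1 c2 : ℕ, 1 ≤ a1 → 1 ≤ a2 → 1 ≤ c1 → 1 ≤ c2 →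
      a1 + a2 = c1 + c2 →
      z a1 a2 - z c1 c2
        - ((if c1 < a1 then v c1 (a1 - c1) else 0) +
           (if c2 < a1 then v c2 (a1 - c2) else 0) +
           (if c1 < a2 then v c1 (a2 - c1) else 0) +
           (if c2 < a2 then v c2 (a2 - c2) else 0))
        + ((if a1 < c1 then v a1 (c1 - a1) else 0) +
           (if a2 < c1 then v a2 (c1 - a2) else 0) +
           (if a1 < c2 then v a1 (c2 - a1) else 0) +
           (if a2 < c2 then v a2 (c2 - a2) else 0)) = 0) :
    ∀ n : ℕ, ∀ i j : ℕ, 1 ≤ i → 1 ≤ j → i + j = n → v i j = FF (alph v) i j := by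
  intro n
  induction n using Nat.strong_induction_on with
  | _ n IH =>
  rcases Nat.lt_or_ge n 4 with hn4 | hn4
  · interval_cases n
    · intro i j hi hj hij; exact absurd hij (by omega)
    · intro i j hi hj hij; exact absurd hij (by omega)
    · intro i j hi hj hij
      obtain ⟨rfl, rfl⟩ : i = 1 ∧ j = 1 := by omega
      simp only [FF, show (1:ℕ)+1 = 2 from rfl, alph]
      push_cast
      match_scalars <;> norm_num
    · have h112 : v 1 2 = (2:ℚ) • v 1 1 := by
        have h := h1 1 1 1 le_rfl le_rfl le_rfl
        simp only [hz, show (1:ℕ)+1 = 2 from rfl] at h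
        linear_combination (norm := module) ((1:ℚ)/3) • h
      intro i j hi hj hij
      have hij' : (i = 1 ∧ j = 2) ∨ (i = 2 ∧ j = 1) := by omega
      rcases hij' with ⟨rfl, rfl⟩ | ⟨rfl, rfl⟩
      · simp only [FF, show (1:ℕ)+2 = 3 from rfl, alph]
        push_cast
        linear_combination (norm := module) h112
      · simp only [FF, show (2:ℕ)+1 = 3 from rfl, alph]
        push_cast
        match_scalars <;> norm_num
  · obtain ⟨m, rfl⟩ : ∃ m, n = m + 4 := ⟨n - 4, by omega⟩
    obtain ⟨T, hT⟩ : ∃ T : ℕ → V, ∀ k, T k = v k (m+4-k) - FF (alph v) k (m+4-k) :=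
      ⟨_, fun _ => rfl⟩
    have hA' : ∀ a b c : ℕ, 1 ≤ a → 1 ≤ b → 1 ≤ c → a + b + c = m + 4 →
        T a + T b + T c = 0 := by
      intro a b c ha hb hc habc
      have h := h1 a b c ha hb hc
      simp only [hz] at h
      have e1 := IH (a+b) (by omega) a b ha hb rfl
      have e2 := IH (b+a) (by omega) b a hb ha rfl
      have e3 := IH (a+c) (by omega) a c ha hc rfl
      have e4 := IH (c+a) (by omega) c a hc ha rfl
      have e5 := IH (b+c) (by omega) b c hb hc rfl
      have e6 := IH (c+b) (by omega) c b hc hb rfl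
      have hf := ffh1 (alph v) a b c ha hb hc
      simp only [hT]
      rw [show m+4-a = b+c from by omega, show m+4-b = a+c from by omega,
          show m+4-c = a+b from by omega]
      linear_combination (norm := module) h - hf + e1 + e2 + e3 + e4 + e5 + e6
    have hT1 : T 1 = 0 := by
      rw [hT, show m+4-1 = m+3 from by omega]
      have h4 : ((m:ℚ)+4) ≠ 0 := by positivity
      have h5 : (3:ℚ) - ((m:ℚ)+4) ≠ 0 := by
        have : (0:ℚ) ≤ m := Nat.cast_nonneg m
        intro hcon; linarith
      have h6 : (1:ℚ) + ((m:ℚ)+3) ≠ 0 := by positivity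
      simp only [FF]
      rw [show 1 + (m+3) = m+4 from by omega]
      simp only [alph]
      rw [sub_eq_zero]
      push_cast
      match_scalars <;> (field_simp; try ring)
    have hB' : ∀ p q : ℕ, 1 ≤ p → 1 ≤ q → p + q + 2 = m + 4 →
        T (p+1) + T (q+1) = T 1 + T (m+3) := by
      intro p q hp hq hpq
      have h := h2 (p+1) (q+1) 1 (p+q+1) (by omega) (by omega) (by omega) (by omega) (by omega)
      rw [if_pos (show 1 < p+1 from by omega), if_neg (show ¬ p+q+1 < p+1 from by omega),
          if_pos (show 1 < q+1 from by omega), if_neg (show ¬ p+q+1 < q+1 from by omega),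
          if_neg (show ¬ p+1 < 1 from by omega), if_neg (show ¬ q+1 < 1 from by omega),
          if_pos (show p+1 < p+q+1 from by omega), if_pos (show q+1 < p+q+1 from by omega),
          show p+1-1 = p from by omega, show q+1-1 = q from by omega,
          show p+q+1-(p+1) = q from by omega, show p+q+1-(q+1) = p from by omega] at h
      simp only [hz] at h
      have e1 := IH (1+p) (by omega) 1 p le_rfl hp rfl
      have e2 := IH (1+q) (by omega) 1 q le_rfl hq rfl
      have e3 := IH (p+1+q) (by omega) (p+1) q (by omega) hq rfl
      have e4 := IH (q+1+p) (by omega) (q+1) p (by omega) hp rfl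
      have hf := ffh2 (alph v) p q hp hq
      simp only [hT]
      rw [show m+4-(p+1) = q+1 from by omega, show m+4-(q+1) = p+1 from by omega,
          show m+4-(m+3) = 1 from by omega, show m+4-1 = p+q+1 from by omega,
          show m+3 = p+q+1 from by omega]
      linear_combination (norm := module) hf - h - e1 - e2 + e3 + e4
    have hBt : ∀ k, 1 ≤ k → k ≤ m+3 → T k + T (m+4-k) = T 1 + T (m+3) := by
      intro k hk1 hk3
      rcases eq_or_ne k 1 with rfl | hne1
      · rw [show m+4-1 = m+3 from by omega]
      · rcases eq_or_ne k (m+3) with rfl | hne2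
        · rw [show m+4-(m+3) = 1 from by omega]; abel
        · obtain ⟨p, rfl⟩ : ∃ p, k = p + 1 := ⟨k-1, by omega⟩
          have hb := hB' p (m+2-p) (by omega) (by omega) (by omega)
          rw [show m+2-p+1 = m+4-(p+1) from by omega] at hb
          exact hb
    have hpair : ∀ k, 1 ≤ k → k ≤ m+2 → T k + T (m+3-k) = 0 := by
      intro k hk1 hk2
      have h := hA' 1 k (m+3-k) le_rfl hk1 (by omega) (by omega)
      linear_combination (norm := module) h - hT1
    have hstep : ∀ k, 1 ≤ k → k ≤ m+2 → T (k+1) = T k + T (m+3) := by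
      intro k hk1 hk2
      have hb := hBt (k+1) (by omega) (by omega)
      rw [show m+4-(k+1) = m+3-k from by omega] at hb
      have hp := hpair k hk1 hk2
      linear_combination (norm := module) hb - hp + hT1
    have hlin : ∀ k, 1 ≤ k → k ≤ m+3 → T k = ((k:ℚ) - 1) • T (m+3) := by
      intro k
      induction k with
      | zero => intro h _; exact absurd h (by omega)
      | succ k ih =>
        intro _ hk2
        rcases Nat.eq_zero_or_pos k with rfl | hk
        · rw [hT1]; norm_num
        · rw [hstep k hk (by omega), ih hk (by omega)]
          push_cast
          module
    have hpen : T (m+2) = 0 := by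
      have h := hA' 1 1 (m+2) le_rfl le_rfl (by omega) (by omega)
      linear_combination (norm := module) h - hT1 - hT1
    have hlast : T (m+3) = 0 := by
      have h := hlin (m+2) (by omega) (by omega)
      rw [hpen] at h
      have hc : ((m+2 : ℕ) : ℚ) - 1 ≠ 0 := by
        have : ((m+2 : ℕ) : ℚ) - 1 = (m:ℚ) + 1 := by push_cast; ring
        rw [this]; positivity
      rcases smul_eq_zero.mp h.symm with h' | h'
      · exact absurd h' hc
      · exact h'
    intro i j hi hj hij
    have h := hlin i hi (by omega)
    rw [hlast, smul_zero, hT, show m+4-i = j from by omega] at h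
    exact sub_eq_zero.mp h

end Aux

theorem stmt1 (V : Type*) [AddCommGroup V] [Module ℚ V] (v : ℕ → ℕ → V)
    (z : ℕ → ℕ → V) (hz : ∀ i j, z i j = -v i j - v j i)
    (h1 : ∀ a1 a2 a3 : ℕ, 1 ≤ a1 → 1 ≤ a2 → 1 ≤ a3 →
      (v a3 (a1 + a2) + z a1 a2) + (v a2 (a1 + a3) + z a1 a3) +
        (v a1 (a2 + a3) + z a2 a3) = 0)
    (h2 : ∀ a1 a2 c1 c2 : ℕ, 1 ≤ a1 → 1 ≤ a2 → 1 ≤ c1 → 1 ≤ c2 →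
      a1 + a2 = c1 + c2 →
      z a1 a2 - z c1 c2
        - ((if c1 < a1 then v c1 (a1 - c1) else 0) +
           (if c2 < a1 then v c2 (a1 - c2) else 0) +
           (if c1 < a2 then v c1 (a2 - c1) else 0) +
           (if c2 < a2 then v c2 (a2 - c2) else 0))
        + ((if a1 < c1 then v a1 (c1 - a1) else 0) +
           (if a2 < c1 then v a2 (c1 - a2) else 0) +
           (if a1 < c2 then v a1 (c2 - a1) else 0) +
           (if a2 < c2 then v a2 (c2 - a2) else 0)) = 0) :
    ∃ α : ℕ → V, α 1 = 0 ∧ ∀ i j : ℕ, 1 ≤ i → 1 ≤ j →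
      v i j = ((i : ℚ) / (i + j) - 1 / 3) • α (i + j)
        + (1 / 3 - ((i : ℚ) + j) / i) • α i + (1 / 3 : ℚ) • α j := by
  refine ⟨alph v, rfl, fun i j hi hj => ?_⟩
  exact key v z hz h1 h2 (i+j) i j hi hj rfl
end

section
/- Let V be a ℚ-vector space and d ≥ 5. Suppose v_{i,j,k} ∈ V are given for all positive integers i,j,k with i+j+k = d, satisfying: (1) for all positive integers b_1,b_2,b_3,a with b_1+b_2+b_3+a = d, the sum over pairs {i<j} with {i,j,k}={1,2,3} of v_{b_k, b_i+b_j, a} equals 0; and (2) k·v_{i,j,k} + j·v_{i,k,j} = 0 for all valid i,j,k. Then there exists α ∈ V such that v_{i,j,k} = (i/(d-1) - 1/3)·(δ_{k,1} - (1/k)·δ_{j,1})·α, where δ denotes the Kronecker delta. -/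
theorem stmt2 (V : Type*) [AddCommGroup V] [Module ℚ V] (d : ℕ) (hd : 5 ≤ d)
    (v : ℕ → ℕ → ℕ → V)
    (h1 : ∀ b1 b2 b3 a : ℕ, 1 ≤ b1 → 1 ≤ b2 → 1 ≤ b3 → 1 ≤ a →
      b1 + b2 + b3 + a = d →
      v b3 (b1 + b2) a + v b2 (b1 + b3) a + v b1 (b2 + b3) a = 0)
    (h2 : ∀ i j k : ℕ, 1 ≤ i → 1 ≤ j → 1 ≤ k → i + j + k = d →
      (k : ℚ) • v i j k + (j : ℚ) • v i k j = 0) :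
    ∃ α : V, ∀ i j k : ℕ, 1 ≤ i → 1 ≤ j → 1 ≤ k → i + j + k = d →
      v i j k = (((i : ℚ) / ((d : ℚ) - 1) - 1 / 3) *
        ((if k = 1 then (1 : ℚ) else 0) - (1 / (k : ℚ)) * (if j = 1 then 1 else 0))) • α := by
  have hd5 : (5:ℚ) ≤ (d:ℚ) := by exact_mod_cast hd
  have hd1 : ((d:ℚ) - 1) ≠ 0 := by intro h; linarith
  -- the difference relation: f(x+1) - f(x) = f(2) - f(1)
  have star : ∀ a x z : ℕ, 1 ≤ a → 1 ≤ x → 1 ≤ z → x + z + 2 + a = d →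
      v (x+1) (z+1) a = v x (z+2) a + (v 2 (x+z) a - v 1 (x+z+1) a) := by
    intro a x z ha hx hz hsum
    have e1 := h1 x 2 z a hx (by norm_num) hz ha (by omega)
    have e2 := h1 (x+1) 1 z a (by omega) le_rfl hz ha (by omega)
    rw [show 2 + z = z + 2 from by omega] at e1
    rw [show x + 1 + 1 = x + 2 from by omega, show x + 1 + z = x + z + 1 from by omega,
      show 1 + z = z + 1 from by omega] at e2
    linear_combination (norm := module) e2 - e1
  -- affine structure
  have aff : ∀ a s : ℕ, 1 ≤ a → s + a = d → ∀ x : ℕ, 1 ≤ x → x + 2 ≤ s →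
      v x (s - x) a = v 1 (s-1) a + ((x:ℚ) - 1) • (v 2 (s-2) a - v 1 (s-1) a) := by
    intro a s ha hs x hx
    induction x, hx using Nat.le_induction with
    | base => intro _; rw [show s - 1 = s - 1 from rfl]; push_cast; module
    | succ n hn ih =>
      intro h
      have hstar := star a n (s - n - 2) ha hn (by omega) (by omega)
      rw [show s - n - 2 + 1 = s - (n+1) from by omega,
        show s - n - 2 + 2 = s - n from by omega,
        show n + (s - n - 2) + 1 = s - 1 from by omega,
        show n + (s - n - 2) = s - 2 from by omega] at hstar
      rw [hstar, ih (by omega)]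
      push_cast
      module
  -- the constraint pinning down f(1)
  have bse : ∀ a s : ℕ, 1 ≤ a → 3 ≤ s → s + a = d →
      (3:ℚ) • v 1 (s-1) a + ((s:ℚ) - 3) • (v 2 (s-2) a - v 1 (s-1) a) = 0 := by
    intro a s ha hs3 hsd
    have e := h1 1 1 (s-2) a le_rfl le_rfl (by omega) ha (by omega)
    rw [show 1 + (s-2) = s - 1 from by omega, show (1+1 : ℕ) = 2 from rfl] at e
    have e2 := aff a s ha hsd (s-2) (by omega) (by omega)
    rw [show s - (s-2) = 2 from by omega] at e2
    rw [e2] at e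
    rw [show ((s-2:ℕ):ℚ) = (s:ℚ) - 2 from by
      have : (2:ℕ) ≤ s := by omega
      push_cast [this]; ring] at e
    linear_combination (norm := module) e
  -- main formula for j ≥ 2
  have key : ∀ a i j : ℕ, 1 ≤ a → 1 ≤ i → 2 ≤ j → i + j + a = d →
      v i j a = ((i:ℚ) - ((i:ℚ)+(j:ℚ))/3) • (v 2 (i+j-2) a - v 1 (i+j-1) a) := by
    intro a i j ha hi hj hsum
    have e2 := aff a (i+j) ha (by omega) i hi (by omega)
    rw [show i + j - i = j from by omega] at e2
    have e3 := bse a (i+j) ha (by omega) (by omega)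
    rw [e2]
    push_cast at e3 ⊢
    linear_combination (norm := module) (1/3 : ℚ) • e3
  -- vanishing when j, k ≥ 2
  have hB2 : 6 ≤ d → v 2 (d-4) 2 - v 1 (d-3) 2 = 0 := by
    intro hd6
    have e := h2 (d-4) 2 2 (by omega) (by norm_num) (by norm_num) (by omega)
    have hv : v (d-4) 2 2 = 0 := by
      have h4 : (4:ℚ) • v (d-4) 2 2 = 0 := by
        linear_combination (norm := module) e
      simpa using (smul_eq_zero.mp h4).resolve_left (by norm_num)
    have hk := key 2 (d-4) 2 (by norm_num) (by omega) le_rfl (by omega)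
    rw [show d - 4 + 2 - 2 = d - 4 from by omega, show d - 4 + 2 - 1 = d - 3 from by omega,
      hv] at hk
    have hc : ((d-4:ℕ):ℚ) - (((d-4:ℕ):ℚ) + 2)/3 ≠ 0 := by
      rw [show ((d-4:ℕ):ℚ) = (d:ℚ) - 4 from by
        have : (4:ℕ) ≤ d := by omega
        push_cast [this]; ring]
      intro h
      have hd6' : (6:ℚ) ≤ (d:ℚ) := by exact_mod_cast hd6
      linarith
    exact ((smul_eq_zero.mp hk.symm).resolve_left hc)
  have hBk : ∀ k : ℕ, 2 ≤ k → k + 4 ≤ d → v 2 (d-k-2) k - v 1 (d-k-1) k = 0 := by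
    intro k hk2 hk4
    have hd6 : 6 ≤ d := by omega
    have e := h2 (d-k-2) 2 k (by omega) (by norm_num) (by omega) (by omega)
    have hvk2 : v (d-k-2) k 2 = 0 := by
      have hk' := key 2 (d-k-2) k (by norm_num) (by omega) hk2 (by omega)
      rw [show d - k - 2 + k - 2 = d - 4 from by omega,
        show d - k - 2 + k - 1 = d - 3 from by omega, hB2 hd6] at hk'
      simpa using hk'
    rw [hvk2, smul_zero, add_zero] at e
    have hvk : v (d-k-2) 2 k = 0 := by
      have := smul_eq_zero.mp e
      rcases this with h | h
      · exfalso; have : (k:ℚ) ≠ 0 := by positivity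
        exact this h
      · exact h
    have hk' := key k (d-k-2) 2 (by omega) (by omega) le_rfl (by omega)
    rw [show d - k - 2 + 2 - 2 = d - k - 2 from by omega,
      show d - k - 2 + 2 - 1 = d - k - 1 from by omega, hvk] at hk'
    have hc : ((d-k-2:ℕ):ℚ) - (((d-k-2:ℕ):ℚ) + 2)/3 ≠ 0 := by
      rw [show ((d-k-2:ℕ):ℚ) = (d:ℚ) - k - 2 from by
        rw [show d - k - 2 = d - (k+2) from by omega, Nat.cast_sub (by omega)]
        push_cast; ring]
      intro h
      have hk4' : (k:ℚ) + 4 ≤ (d:ℚ) := by exact_mod_cast hk4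
      linarith
    exact ((smul_eq_zero.mp hk'.symm).resolve_left hc)
  have hvjk : ∀ i j k : ℕ, 1 ≤ i → 2 ≤ j → 2 ≤ k → i + j + k = d → v i j k = 0 := by
    intro i j k hi hj hk hsum
    by_cases h4 : k + 4 ≤ d
    · have hk' := key k i j (by omega) hi hj hsum
      rw [show i + j - 2 = d - k - 2 from by omega,
        show i + j - 1 = d - k - 1 from by omega, hBk k hk h4] at hk'
      simpa using hk'
    · -- k = d - 3, so i = 1, j = 2
      have hi1 : i = 1 := by omega
      have hj2 : j = 2 := by omega
      subst hi1; subst hj2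
      have e := h2 1 2 k le_rfl (by norm_num) (by omega) hsum
      have hvk2 : v 1 k 2 = 0 := by
        have hk' := key 2 1 k (by norm_num) le_rfl hk (by omega)
        by_cases hd6 : 6 ≤ d
        · rw [show 1 + k - 2 = d - 4 from by omega,
            show 1 + k - 1 = d - 3 from by omega, hB2 hd6] at hk'
          simpa using hk'
        · have hd5' : d = 5 := by omega
          have hk2 : k = 2 := by omega
          subst hk2
          rw [hk']
          norm_num
      rw [hvk2, smul_zero, add_zero] at e
      rcases smul_eq_zero.mp e with h | h
      · exfalso; have : (k:ℚ) ≠ 0 := by positivity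
        exact this h
      · exact h
  -- now build α
  refine ⟨((d:ℚ) - 1) • (v 2 (d-3) 1 - v 1 (d-2) 1), ?_⟩
  intro i j k hi hj hk hsum
  by_cases hk1 : k = 1
  · subst hk1
    by_cases hj1 : j = 1
    · subst hj1
      have e := h2 i 1 1 hi le_rfl le_rfl hsum
      have hv : v i 1 1 = 0 := by
        have h2' : (2:ℚ) • v i 1 1 = 0 := by
          linear_combination (norm := module) e
        simpa using (smul_eq_zero.mp h2').resolve_left (by norm_num)
      rw [hv]
      simp
    · have hj2 : 2 ≤ j := by omega
      have hk' := key 1 i j le_rfl hi hj2 hsum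
      rw [show i + j - 2 = d - 3 from by omega,
        show i + j - 1 = d - 2 from by omega] at hk'
      rw [hk', if_pos rfl, if_neg hj1]
      rw [smul_smul]
      congr 1
      have hij : (i:ℚ) + (j:ℚ) = (d:ℚ) - 1 := by
        have : ((i + j + 1 : ℕ) : ℚ) = (d:ℚ) := by exact_mod_cast congrArg (Nat.cast : ℕ → ℚ) hsum
        push_cast at this
        linarith
      rw [hij]
      field_simp
      ring
  · by_cases hj1 : j = 1
    · subst hj1
      have hk2 : 2 ≤ k := by omega
      have e := h2 i 1 k hi le_rfl (by omega) hsum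
      have hvik : v i k 1 = ((i:ℚ) - ((i:ℚ)+(k:ℚ))/3) • (v 2 (d-3) 1 - v 1 (d-2) 1) := by
        have hk' := key 1 i k le_rfl hi hk2 (by omega)
        rw [show i + k - 2 = d - 3 from by omega,
          show i + k - 1 = d - 2 from by omega] at hk'
        exact hk'
      rw [hvik] at e
      have hkQ : (k:ℚ) ≠ 0 := by positivity
      have hik : (i:ℚ) + (k:ℚ) = (d:ℚ) - 1 := by
        have : ((i + 1 + k : ℕ) : ℚ) = (d:ℚ) := by exact_mod_cast congrArg (Nat.cast : ℕ → ℚ) hsum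
        push_cast at this
        linarith
      have hv : v i 1 k = (-(1/(k:ℚ)) * ((i:ℚ) - ((d:ℚ)-1)/3)) • (v 2 (d-3) 1 - v 1 (d-2) 1) := by
        have h3 : (k:ℚ) • v i 1 k = (-( (i:ℚ) - ((d:ℚ)-1)/3)) • (v 2 (d-3) 1 - v 1 (d-2) 1) := by
          rw [← hik]
          linear_combination (norm := module) e
        have := congrArg (fun x => (1/(k:ℚ)) • x) h3
        simp only [smul_smul] at this
        rw [show (1/(k:ℚ)) * (k:ℚ) = 1 from by field_simp, one_smul] at this
        rw [this]
        congr 1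
        ring
      rw [hv, if_neg hk1, if_pos rfl, smul_smul]
      congr 1
      field_simp
      ring
    · have hj2 : 2 ≤ j := by omega
      have hk2 : 2 ≤ k := by omega
      rw [hvjk i j k hi hj2 hk2 hsum, if_neg hk1, if_neg hj1]
      simp
end

section
/- Let V be a ℚ-vector space and d ∈ {3,4}. Suppose v_{i,j,k} ∈ V are given for all positive integers i,j,k with i+j+k = d, satisfying: (1) for all positive integers b_1,b_2,b_3,a with b_1+b_2+b_3+a = d, the sum over pairs {i<j} with {i,j,k}={1,2,3} of v_{b_k, b_i+b_j, a} equals 0; and (2) k·v_{i,j,k} + j·v_{i,k,j} = 0. Then v_{i,j,k} = 0 for all such triples. -/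
theorem stmt3 (V : Type*) [AddCommGroup V] [Module ℚ V] (d : ℕ)
    (hd : d = 3 ∨ d = 4) (v : ℕ → ℕ → ℕ → V)
    (h1 : ∀ b1 b2 b3 a : ℕ, 1 ≤ b1 → 1 ≤ b2 → 1 ≤ b3 → 1 ≤ a →
      b1 + b2 + b3 + a = d →
      v b3 (b1 + b2) a + v b2 (b1 + b3) a + v b1 (b2 + b3) a = 0)
    (h2 : ∀ i j k : ℕ, 1 ≤ i → 1 ≤ j → 1 ≤ k → i + j + k = d →
      (k : ℚ) • v i j k + (j : ℚ) • v i k j = 0) :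
    ∀ i j k : ℕ, 1 ≤ i → 1 ≤ j → 1 ≤ k → i + j + k = d → v i j k = 0 := by
  intro i j k hi hj hk hsum
  rcases hd with hd | hd
  · -- d = 3 : only (1,1,1)
    obtain ⟨rfl, rfl, rfl⟩ : i = 1 ∧ j = 1 ∧ k = 1 := by omega
    have h := h2 1 1 1 le_rfl le_rfl le_rfl (by omega)
    have h' : (2 : ℚ) • v 1 1 1 = 0 := by
      rw [two_smul]; simpa using h
    have := smul_eq_zero.mp h'
    simpa using this
  · -- d = 4
    have h121 : v 1 2 1 = 0 := by
      have h := h1 1 1 1 1 le_rfl le_rfl le_rfl le_rfl (by omega)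
      norm_num at h
      have h' : (3 : ℚ) • v 1 2 1 = 0 := by
        rw [show (3:ℚ) = 1 + 1 + 1 by norm_num, add_smul, add_smul, one_smul]
        abel_nf
        abel_nf at h
        exact h
      have := smul_eq_zero.mp h'
      simpa using this
    have h112 : v 1 1 2 = 0 := by
      have h := h2 1 1 2 le_rfl le_rfl (by norm_num) (by omega)
      rw [h121] at h
      norm_num at h
      exact h
    have h211 : v 2 1 1 = 0 := by
      have h := h2 2 1 1 (by norm_num) le_rfl le_rfl (by omega)
      norm_num at h
      have h' : (2 : ℚ) • v 2 1 1 = 0 := by rw [two_smul]; exact h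
      have := smul_eq_zero.mp h'
      simpa using this
    have hi2 : i ≤ 2 := by omega
    have hj2 : j ≤ 2 := by omega
    have hk2 : k ≤ 2 := by omega
    interval_cases i <;> interval_cases j <;> interval_cases k <;> first | omega | exact h112 | exact h121 | exact h211
end

section
/- Define the double factorial by (-1)!! = 1, 1!! = 1, and (2k+1)!! = (2k+1)·(2k-1)!! for k ≥ 0. Let g ≥ 2 and N ≥ 2, and let l_1 = -1 and l_2,...,l_N be nonnegative integers with l_1 + ... + l_N = g - 2. Then Σ_{i=2}^N [(2g-4+N)! / ((2l_i - 1)!! · Π_{2≤j≤N, j≠i} (2l_j+1)!!)] = (2g-3+N)! / Π_{i=1}^N (2l_i+1)!!. -/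
/-- `df k = (2k-1)!!`, with `df 0 = (-1)!! = 1`. -/
def df : ℕ → ℕ
  | 0 => 1
  | k + 1 => (2 * k + 1) * df k

lemma df_pos (k : ℕ) : 0 < df k := by
  induction k with
  | zero => simp [df]
  | succ k ih => exact Nat.mul_pos (by omega) ih

theorem stmt7 (g N : ℕ) (hg : 2 ≤ g) (hN : 2 ≤ N) [NeZero N] (l : Fin N → ℤ)
    (hl0 : l 0 = -1) (hl : ∀ i : Fin N, i ≠ 0 → 0 ≤ l i)
    (hsum : ∑ i, l i = (g : ℤ) - 2) :
    ∑ i ∈ Finset.univ.filter (· ≠ (0 : Fin N)),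
      ((Nat.factorial (2 * g - 4 + N) : ℚ) /
        ((df (l i).toNat : ℚ) *
          ∏ j ∈ Finset.univ.filter (fun j => j ≠ (0 : Fin N) ∧ j ≠ i),
            (df ((l j + 1).toNat) : ℚ))) =
    (Nat.factorial (2 * g - 3 + N) : ℚ) / ∏ i, (df ((l i + 1).toNat) : ℚ) := by
  obtain ⟨g, rfl⟩ : ∃ g', g = g' + 2 := ⟨g - 2, by omega⟩
  have e1 : 2 * (g + 2) - 4 + N = 2 * g + N := by omega
  have e2 : 2 * (g + 2) - 3 + N = 2 * g + N + 1 := by omega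
  rw [e1, e2]
  have hdfQ : ∀ k, (0 : ℚ) < (df k : ℚ) := fun k => by exact_mod_cast df_pos k
  set f : Fin N → ℚ := fun j => (df ((l j + 1).toNat) : ℚ) with hf
  set S := Finset.univ.filter (· ≠ (0 : Fin N)) with hSdef
  have hS : S = Finset.univ.erase 0 := Finset.filter_ne' _ _
  have h0 : f 0 = 1 := by simp [hf, hl0, df]
  have hP : ∏ i, f i = ∏ i ∈ S, f i := by
    rw [hS, ← Finset.mul_prod_erase Finset.univ f (Finset.mem_univ 0), h0, one_mul]
  have hPpos : (0 : ℚ) < ∏ i ∈ S, f i := Finset.prod_pos fun i _ => hdfQ _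
  set P := ∏ i ∈ S, f i with hPdef
  set F : ℚ := (Nat.factorial (2 * g + N) : ℚ) with hF
  -- termwise rewrite
  have hterm : ∀ i ∈ S, (F /
      ((df (l i).toNat : ℚ) *
        ∏ j ∈ Finset.univ.filter (fun j => j ≠ (0 : Fin N) ∧ j ≠ i), f j))
      = F * (2 * ((l i).toNat : ℚ) + 1) / P := by
    intro i hi
    have hi0 : i ≠ 0 := by
      rw [hSdef, Finset.mem_filter] at hi; exact hi.2
    have hli : 0 ≤ l i := hl i hi0
    have hfilter : Finset.univ.filter (fun j => j ≠ (0 : Fin N) ∧ j ≠ i) = S.erase i := by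
      ext j
      simp [hSdef, and_comm]
    have hfi : f i = (2 * ((l i).toNat : ℚ) + 1) * (df (l i).toNat : ℚ) := by
      have : (l i + 1).toNat = (l i).toNat + 1 := by omega
      rw [hf]
      simp only [this, df]
      push_cast
      ring
    have hPeq : P = f i * ∏ j ∈ S.erase i, f j :=
      (Finset.mul_prod_erase S f hi).symm
    rw [hfilter]
    have hprodpos : (0 : ℚ) < ∏ j ∈ S.erase i, f j := Finset.prod_pos fun j _ => hdfQ _
    rw [hPeq, hfi]
    have hd : (0:ℚ) < (df (l i).toNat : ℚ) := hdfQ _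
    field_simp
  rw [Finset.sum_congr rfl hterm, ← hP]
  rw [hP, ← Finset.sum_div, ← Finset.mul_sum]
  -- compute the sum of coefficients
  have hcard : (S.card : ℚ) = (N : ℚ) - 1 := by
    rw [hS, Finset.card_erase_of_mem (Finset.mem_univ 0), Finset.card_univ, Fintype.card_fin]
    have : 1 ≤ N := by omega
    push_cast [Nat.cast_sub this]
    ring
  have hsumS : ∑ i ∈ S, (l i : ℚ) = (g : ℚ) + 1 := by
    have h1 : ∑ i, (l i : ℚ) = (g : ℚ) := by
      have := congrArg (fun z : ℤ => (z : ℚ)) hsum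
      push_cast at this
      rw [this]; ring
    have h2 : ∑ i, (l i : ℚ) = (l 0 : ℚ) + ∑ i ∈ S, (l i : ℚ) := by
      rw [hS, ← Finset.add_sum_erase Finset.univ _ (Finset.mem_univ 0)]
    rw [h1, hl0] at h2
    push_cast at h2
    linarith
  have hcoeff : ∑ i ∈ S, (2 * ((l i).toNat : ℚ) + 1) = 2 * (g : ℚ) + N + 1 := by
    have : ∀ i ∈ S, (2 * ((l i).toNat : ℚ) + 1) = 2 * (l i : ℚ) + 1 := by
      intro i hi
      have hi0 : i ≠ 0 := by rw [hSdef, Finset.mem_filter] at hi; exact hi.2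
      have hli := hl i hi0
      have : ((l i).toNat : ℤ) = l i := Int.toNat_of_nonneg hli
      have : ((l i).toNat : ℚ) = (l i : ℚ) := by exact_mod_cast congrArg (fun z : ℤ => (z:ℚ)) this
      rw [this]
    rw [Finset.sum_congr rfl this, Finset.sum_add_distrib, ← Finset.mul_sum, hsumS,
      Finset.sum_const, nsmul_eq_mul, mul_one, hcard]
    ring
  rw [hcoeff, Nat.factorial_succ]
  have hcast : ((2 * g + N + 1 : ℕ) : ℚ) = 2 * (g : ℚ) + N + 1 := by push_cast; ring
  push_cast [hF]
  ring
end

section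
/- Let g ≥ 2 and let α_d, d ≥ 2, be elements of a ℚ-vector space W (with α_1 := 0) satisfying α_{2d} = 8·α_d + d^{2g+1}·α_2 for all d ≥ 1, and ((d-1)/d - 1/3)·(8 - 2^{2g+1})·α_d + (1/3 - d/(d-1))·(8 - 2^{2g+1})·α_{d-1} + [((d-1)/d - 1/3)·d^{2g+1} + (1/3 - d/(d-1))·(d-1)^{2g+1} + 1/3]·α_2 = 0 for all d ≥ 3. Then α_d = ((d^3 - d^{2g+1})/(2^3 - 2^{2g+1}))·α_2 for all d ≥ 2. -/
theorem stmt8 (W : Type*) [AddCommGroup W] [Module ℚ W] (g : ℕ) (hg : 2 ≤ g)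
    (α : ℕ → W) (hα1 : α 1 = 0)
    (h1 : ∀ d : ℕ, 1 ≤ d → α (2 * d) = (8 : ℚ) • α d + ((d : ℚ) ^ (2 * g + 1)) • α 2)
    (h2 : ∀ d : ℕ, 3 ≤ d →
      ((((d : ℚ) - 1) / d - 1 / 3) * (8 - 2 ^ (2 * g + 1))) • α d +
      ((1 / 3 - (d : ℚ) / ((d : ℚ) - 1)) * (8 - 2 ^ (2 * g + 1))) • α (d - 1) +
      ((((d : ℚ) - 1) / d - 1 / 3) * (d : ℚ) ^ (2 * g + 1) +
        (1 / 3 - (d : ℚ) / ((d : ℚ) - 1)) * ((d : ℚ) - 1) ^ (2 * g + 1) + 1 / 3) • α 2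
      = 0) :
    ∀ d : ℕ, 2 ≤ d →
      α d = (((d : ℚ) ^ 3 - (d : ℚ) ^ (2 * g + 1)) / (2 ^ 3 - 2 ^ (2 * g + 1))) • α 2 := by
  have hK : (8 : ℚ) - 2 ^ (2 * g + 1) ≠ 0 := by
    have h5 : (2:ℚ)^5 ≤ 2 ^ (2*g+1) := by
      apply pow_le_pow_right₀ (by norm_num); omega
    norm_num at h5; intro h; linarith
  intro d hd
  induction d, hd using Nat.le_induction with
  | base =>
    norm_num
    rw [div_self (by norm_num at hK ⊢; exact hK), one_smul]
  | succ n hn ih =>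
    have h := h2 (n + 1) (by omega)
    have hns : (n + 1 : ℕ) - 1 = n := by omega
    rw [hns] at h
    push_cast at h
    rw [ih] at h
    rw [smul_smul, add_assoc, ← add_smul] at h
    -- h : A • α (n+1) + E • α 2 = 0
    have hn2 : (2:ℚ) ≤ (n:ℚ) := by exact_mod_cast hn
    have hA : ((((n:ℚ) + 1) - 1) / ((n:ℚ) + 1) - 1 / 3) * (8 - 2 ^ (2 * g + 1)) ≠ 0 := by
      apply mul_ne_zero _ hK
      have : ((n:ℚ)+1) - 1 = (n:ℚ) := by ring
      rw [this, div_sub_div _ _ (by linarith) (by norm_num : (3:ℚ) ≠ 0)]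
      apply div_ne_zero (by linarith) (by linarith)
    set A := ((((n:ℚ) + 1) - 1) / ((n:ℚ) + 1) - 1 / 3) * (8 - 2 ^ (2 * g + 1)) with hAdef
    set E := ((1 / 3 - ((n:ℚ)+1) / (((n:ℚ)+1) - 1)) * (8 - 2 ^ (2 * g + 1)) *
        (((n:ℚ) ^ 3 - (n:ℚ) ^ (2 * g + 1)) / (2 ^ 3 - 2 ^ (2 * g + 1))) +
        (((((n:ℚ)+1) - 1) / ((n:ℚ)+1) - 1 / 3) * ((n:ℚ)+1) ^ (2 * g + 1) +
          (1 / 3 - ((n:ℚ)+1) / (((n:ℚ)+1) - 1)) * (((n:ℚ)+1) - 1) ^ (2 * g + 1) + 1 / 3)) with hEdef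
    rw [add_eq_zero_iff_eq_neg, ← neg_smul] at h
    have hn0 : (n:ℚ) ≠ 0 := by linarith
    have hn1 : (n:ℚ) + 1 ≠ 0 := by linarith
    have hn1' : ((n:ℚ) + 1) - 1 ≠ 0 := by intro h'; simp at h'; linarith
    have hK3 : (2:ℚ) ^ 3 - 2 ^ (2 * g + 1) ≠ 0 := by
      have : (2:ℚ) ^ 3 = 8 := by norm_num
      rw [this]; exact hK
    have hscal : -E = A * ((((n:ℚ)+1) ^ 3 - ((n:ℚ)+1) ^ (2 * g + 1)) / (2 ^ 3 - 2 ^ (2 * g + 1))) := by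
      rw [hEdef, hAdef]
      field_simp
      ring
    rw [hscal] at h
    have := smul_right_injective W hA (h.trans (mul_smul A _ (α 2)))
    rw [this]
    push_cast
    ring_nf
end

section
/- Let V be a ℚ-vector space, p ≥ 4, and x_1,...,x_{p-2} ∈ V satisfy x_{λ1} + x_{λ2} + x_{λ3} = 0 whenever λ1+λ2+λ3 = p with all λ_i positive. Then x_i = x_1 + (i-1)·(x_2 - x_1) for all 1 ≤ i ≤ p-2, and x_1 = -((p-3)/3)·(x_2 - x_1). -/
theorem stmt11 (V : Type*) [AddCommGroup V] [Module ℚ V] (p : ℕ) (hp : 4 ≤ p)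
    (x : ℕ → V)
    (hx : ∀ l1 l2 l3 : ℕ, 1 ≤ l1 → 1 ≤ l2 → 1 ≤ l3 → l1 + l2 + l3 = p →
      x l1 + x l2 + x l3 = 0) :
    (∀ i : ℕ, 1 ≤ i → i ≤ p - 2 → x i = x 1 + ((i : ℚ) - 1) • (x 2 - x 1)) ∧
    x 1 = -(((p : ℚ) - 3) / 3) • (x 2 - x 1) := by
  have key : ∀ i : ℕ, 1 ≤ i → i + 2 ≤ p → x i = x 1 + ((i : ℚ) - 1) • (x 2 - x 1) := by
    intro i
    induction i with
    | zero => intro h; omega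
    | succ n ih =>
      intro _ hn
      rcases Nat.eq_or_lt_of_le (Nat.one_le_iff_ne_zero.mpr (Nat.succ_ne_zero n)) with h1 | h1
      · obtain rfl : n = 0 := by omega
        norm_num
      · have hn1 : 1 ≤ n := by omega
        have h2 : n + 2 ≤ p := by omega
        have hA := hx (n + 1) 1 (p - n - 2) (by omega) (by omega) (by omega) (by omega)
        have hB := hx n 2 (p - n - 2) (by omega) (by omega) (by omega) (by omega)
        have hrec : x (n + 1) = x n + (x 2 - x 1) := by
          have := sub_eq_zero.mpr (hA.trans hB.symm)
          abel_nf at this ⊢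
          linear_combination (norm := abel) this
        rw [hrec, ih hn1 h2]
        push_cast
        module
  constructor
  · intro i hi1 hi2
    exact key i hi1 (by omega)
  · have hA := hx 1 1 (p - 2) (by omega) (by omega) (by omega) (by omega)
    have hB := key (p - 2) (by omega) (by omega)
    rw [hB] at hA
    have hc : ((p - 2 : ℕ) : ℚ) = (p : ℚ) - 2 := by
      push_cast [Nat.cast_sub (by omega : 2 ≤ p)]; ring
    rw [hc] at hA
    have h3 : (3 : ℚ) • x 1 = -((p : ℚ) - 3) • (x 2 - x 1) := by
      linear_combination (norm := module) hA
    have := congrArg (fun v => (3 : ℚ)⁻¹ • v) h3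
    simp only [smul_smul] at this
    rw [show ((3:ℚ)⁻¹ * 3) = 1 by norm_num, one_smul] at this
    refine this.trans ?_
    rw [show (3:ℚ)⁻¹ * -((p:ℚ) - 3) = -(((p:ℚ) - 3) / 3) by ring]
end
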